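/- arXiv:2110.15093 — 2 statements merged into one kernel-verified Lean document; each statement's English description precedes it below -/
import Mathlib

section
/- Let π* = (π*_0,…,π*_{N−1}) be any policy such that for every stage k and state s, π*_k(s) attains the minimum min_{a∈A} Q_k(s,a), where Q_k is given by the DP backward recursion. Then π* is optimal: J^{π*}(i) = min over all policies π of J^π(i), for every initial state i. -/
open Finset

noncomputable section

/-- The state at time `k` of the trajectory with initial state `i` and
subsequent states `τ 0, …, τ (N-1)` (so `traj N i τ k = s_k`). -/
def traj {S : Type*} (N : ℕ) (i : S) (τ : Fin N → S) : ℕ → S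
  | 0 => i
  | m + 1 => if h : m < N then τ ⟨m, h⟩ else i

/-- `J N p g gN pol i` is the expected total cost over the horizon `N`
when starting in state `i` and following the policy `pol`. -/
def J {S A : Type*} [Fintype S] [DecidableEq S] [Fintype A] (N : ℕ)
    (p g : ℕ → S → A → S → ℝ) (gN : S → ℝ) (pol : ℕ → S → A) (i : S) : ℝ :=
  ∑ τ : Fin N → S,
    (∏ k : Fin N, p k (traj N i τ k) (pol k (traj N i τ k)) (traj N i τ (k + 1))) *
      ((∑ k : Fin N, g k (traj N i τ k) (pol k (traj N i τ k)) (traj N i τ (k + 1)))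
        + gN (traj N i τ N))



lemma traj_cons {S : Type*} (M : ℕ) (i j : S) (σ : Fin M → S) :
    ∀ m, m ≤ M → traj (M+1) i (Fin.cons j σ) (m+1) = traj M j σ m := by
  intro m hm
  match m with
  | 0 => simp [traj]
  | (t+1) =>
    have ht : t < M := hm
    show (if h : t+1 < M+1 then (Fin.cons j σ : Fin (M+1) → S) ⟨t+1, h⟩ else i) = _
    rw [dif_pos (Nat.succ_lt_succ ht)]
    show (Fin.cons j σ : Fin (M+1) → S) (Fin.succ ⟨t, ht⟩) = _
    rw [Fin.cons_succ]
    simp [traj, ht]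

lemma sum_pi_succ {S : Type*} [Fintype S] [DecidableEq S] (M : ℕ) (F : (Fin (M+1) → S) → ℝ) :
    ∑ τ : Fin (M+1) → S, F τ = ∑ j : S, ∑ σ : Fin M → S, F (Fin.cons j σ) := by
  calc ∑ τ : Fin (M+1) → S, F τ
      = ∑ x : S × (Fin M → S), F (Fin.cons x.1 x.2) :=
        (Equiv.sum_comp (Fin.consEquiv (fun _ : Fin (M+1) => S)) F).symm
    _ = ∑ j : S, ∑ σ : Fin M → S, F (Fin.cons j σ) := Fintype.sum_prod_type _

lemma prod_cons_eq {S A : Type*} (M : ℕ) (p : ℕ → S → A → S → ℝ) (pol : ℕ → S → A)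
    (i j : S) (σ : Fin M → S) :
    (∏ k : Fin (M+1), p k (traj (M+1) i (Fin.cons j σ) k)
        (pol k (traj (M+1) i (Fin.cons j σ) k)) (traj (M+1) i (Fin.cons j σ) (k+1)))
    = p 0 i (pol 0 i) j *
      ∏ k : Fin M, p (k+1) (traj M j σ k) (pol (k+1) (traj M j σ k)) (traj M j σ (k+1)) := by
  rw [Fin.prod_univ_succ]
  congr 1
  · apply Finset.prod_congr rfl
    intro k _
    have h1 : ((Fin.succ k : Fin (M+1)) : ℕ) = (k : ℕ) + 1 := rfl
    rw [h1, traj_cons M i j σ k (le_of_lt k.isLt),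
        traj_cons M i j σ ((k : ℕ)+1) (Nat.succ_le_of_lt k.isLt)]

lemma sum_cons_eq {S A : Type*} (M : ℕ) (g : ℕ → S → A → S → ℝ) (pol : ℕ → S → A)
    (i j : S) (σ : Fin M → S) :
    (∑ k : Fin (M+1), g k (traj (M+1) i (Fin.cons j σ) k)
        (pol k (traj (M+1) i (Fin.cons j σ) k)) (traj (M+1) i (Fin.cons j σ) (k+1)))
    = g 0 i (pol 0 i) j +
      ∑ k : Fin M, g (k+1) (traj M j σ k) (pol (k+1) (traj M j σ k)) (traj M j σ (k+1)) := by
  rw [Fin.sum_univ_succ]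
  congr 1
  · apply Finset.sum_congr rfl
    intro k _
    have h1 : ((Fin.succ k : Fin (M+1)) : ℕ) = (k : ℕ) + 1 := rfl
    rw [h1, traj_cons M i j σ k (le_of_lt k.isLt),
        traj_cons M i j σ ((k : ℕ)+1) (Nat.succ_le_of_lt k.isLt)]

lemma mass {S A : Type*} [Fintype S] [DecidableEq S] [Fintype A] :
    ∀ (M : ℕ) (p : ℕ → S → A → S → ℝ) (pol : ℕ → S → A),
    (∀ n < M, ∀ i a, ∑ j, p n i a j = 1) → ∀ i : S,
    ∑ τ : Fin M → S, ∏ k : Fin M,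
      p k (traj M i τ k) (pol k (traj M i τ k)) (traj M i τ (k+1)) = 1 := by
  intro M
  induction M with
  | zero => intro p pol hp1 i; simp
  | succ M ih =>
    intro p pol hp1 i
    rw [sum_pi_succ]
    have hrw : ∀ j : S, ∑ σ : Fin M → S, (∏ k : Fin (M+1),
        p k (traj (M+1) i (Fin.cons j σ) k)
          (pol k (traj (M+1) i (Fin.cons j σ) k)) (traj (M+1) i (Fin.cons j σ) (k+1)))
        = p 0 i (pol 0 i) j := by
      intro j
      have := ih (fun n => p (n+1)) (fun n => pol (n+1))
        (fun n hn i a => hp1 (n+1) (Nat.succ_lt_succ hn) i a) j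
      calc ∑ σ : Fin M → S, _ = ∑ σ : Fin M → S, p 0 i (pol 0 i) j *
            ∏ k : Fin M, p (k+1) (traj M j σ k) (pol (k+1) (traj M j σ k)) (traj M j σ (k+1)) :=
            Finset.sum_congr rfl (fun σ _ => prod_cons_eq M p pol i j σ)
        _ = p 0 i (pol 0 i) j := by rw [← Finset.mul_sum, this, mul_one]
    rw [Finset.sum_congr rfl (fun j _ => hrw j)]
    exact hp1 0 (Nat.succ_pos M) i (pol 0 i)

lemma J_succ {S A : Type*} [Fintype S] [DecidableEq S] [Fintype A]
    (M : ℕ) (p g : ℕ → S → A → S → ℝ) (gN : S → ℝ) (pol : ℕ → S → A)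
    (hp1 : ∀ n < M, ∀ i a, ∑ j, p (n+1) i a j = 1) (i : S) :
    J (M+1) p g gN pol i = ∑ j, p 0 i (pol 0 i) j *
      (g 0 i (pol 0 i) j +
        J M (fun n => p (n+1)) (fun n => g (n+1)) gN (fun n => pol (n+1)) j) := by
  rw [J, sum_pi_succ]
  apply Finset.sum_congr rfl
  intro j _
  have htraj : ∀ σ : Fin M → S, traj (M+1) i (Fin.cons j σ) (M+1) = traj M j σ M :=
    fun σ => traj_cons M i j σ M (le_refl M)
  calc ∑ σ : Fin M → S, _
      = ∑ σ : Fin M → S, p 0 i (pol 0 i) j *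
          ((∏ k : Fin M, p (k+1) (traj M j σ k) (pol (k+1) (traj M j σ k)) (traj M j σ (k+1))) *
            (g 0 i (pol 0 i) j) +
           (∏ k : Fin M, p (k+1) (traj M j σ k) (pol (k+1) (traj M j σ k)) (traj M j σ (k+1))) *
            ((∑ k : Fin M, g (k+1) (traj M j σ k) (pol (k+1) (traj M j σ k)) (traj M j σ (k+1)))
              + gN (traj M j σ M))) := by
        apply Finset.sum_congr rfl
        intro σ _
        rw [prod_cons_eq M p pol i j σ, sum_cons_eq M g pol i j σ, htraj σ]
        ring
    _ = p 0 i (pol 0 i) j * ((∑ σ : Fin M → S, (∏ k : Fin M,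
          p (k+1) (traj M j σ k) (pol (k+1) (traj M j σ k)) (traj M j σ (k+1))) *
            (g 0 i (pol 0 i) j)) +
          J M (fun n => p (n+1)) (fun n => g (n+1)) gN (fun n => pol (n+1)) j) := by
        rw [← Finset.mul_sum, Finset.sum_add_distrib, J]
    _ = p 0 i (pol 0 i) j *
        (g 0 i (pol 0 i) j +
          J M (fun n => p (n+1)) (fun n => g (n+1)) gN (fun n => pol (n+1)) j) := by
        rw [← Finset.sum_mul, mass M (fun n => p (n+1)) (fun n => pol (n+1))
          (fun n hn i a => hp1 n hn i a) j, one_mul]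

lemma key {S A : Type*} [Fintype S] [DecidableEq S] [Nonempty S] [Fintype A] [Nonempty A] :
    ∀ (M : ℕ) (p g : ℕ → S → A → S → ℝ) (gN : S → ℝ),
    (∀ n < M, ∀ i a j, 0 ≤ p n i a j) →
    (∀ n < M, ∀ i a, ∑ j, p n i a j = 1) →
    ∀ (Q : ℕ → S → A → ℝ), (∀ s a, Q M s a = gN s) →
    (∀ k < M, ∀ s a, Q k s a = ∑ j, p k s a j * (g k s a j + ⨅ b, Q (k+1) j b)) →
    ∀ (ps : ℕ → S → A), (∀ k < M, ∀ s, Q k s (ps k s) = ⨅ a, Q k s a) →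
    ∀ i : S, J M p g gN ps i = (⨅ a, Q 0 i a) ∧
      ∀ pol, (⨅ a, Q 0 i a) ≤ J M p g gN pol i := by
  intro M
  induction M with
  | zero =>
    intro p g gN hp0 hp1 Q hQN hQrec ps hgreedy i
    have hJ : ∀ pol : ℕ → S → A, J 0 p g gN pol i = gN i := by
      intro pol; simp [J, traj]
    have hQ : (⨅ a : A, Q 0 i a) = gN i := by
      simp [hQN, ciInf_const]
    exact ⟨by rw [hJ, hQ], fun pol => by rw [hJ, hQ]⟩
  | succ M ih =>
    intro p g gN hp0 hp1 Q hQN hQrec ps hgreedy i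
    set p' := fun n => p (n+1) with hp'
    set g' := fun n => g (n+1) with hg'
    set Q' := fun n => Q (n+1) with hQ'
    have hp0' : ∀ n < M, ∀ i a j, 0 ≤ p' n i a j :=
      fun n hn => hp0 (n+1) (Nat.succ_lt_succ hn)
    have hp1' : ∀ n < M, ∀ i a, ∑ j, p' n i a j = 1 :=
      fun n hn => hp1 (n+1) (Nat.succ_lt_succ hn)
    have hQN' : ∀ s a, Q' M s a = gN s := fun s a => hQN s a
    have hQrec' : ∀ k < M, ∀ s a, Q' k s a =
        ∑ j, p' k s a j * (g' k s a j + ⨅ b, Q' (k+1) j b) :=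
      fun k hk s a => hQrec (k+1) (Nat.succ_lt_succ hk) s a
    have ihfull := fun (j : S) =>
      ih p' g' gN hp0' hp1' Q' hQN' hQrec' (fun n => ps (n+1))
        (fun k hk s => hgreedy (k+1) (Nat.succ_lt_succ hk) s) j
    have hbdd : ∀ (k : ℕ) (s : S), BddBelow (Set.range fun a : A => Q k s a) :=
      fun k s => (Set.finite_range _).bddBelow
    -- value of the greedy policy
    have hstar : J (M+1) p g gN ps i = ⨅ a, Q 0 i a := by
      rw [J_succ M p g gN ps (fun n hn => hp1 (n+1) (Nat.succ_lt_succ hn)) i]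
      have : ∀ j : S, J M p' g' gN (fun n => ps (n+1)) j = ⨅ b, Q 1 j b :=
        fun j => (ihfull j).1
      calc ∑ j, p 0 i (ps 0 i) j * (g 0 i (ps 0 i) j + J M p' g' gN (fun n => ps (n+1)) j)
          = ∑ j, p 0 i (ps 0 i) j * (g 0 i (ps 0 i) j + ⨅ b, Q 1 j b) := by
            apply Finset.sum_congr rfl; intro j _; rw [this j]
        _ = Q 0 i (ps 0 i) := (hQrec 0 (Nat.succ_pos M) i (ps 0 i)).symm
        _ = ⨅ a, Q 0 i a := hgreedy 0 (Nat.succ_pos M) i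
    refine ⟨hstar, fun pol => ?_⟩
    rw [J_succ M p g gN pol (fun n hn => hp1 (n+1) (Nat.succ_lt_succ hn)) i]
    have hle : Q 0 i (pol 0 i) ≤
        ∑ j, p 0 i (pol 0 i) j * (g 0 i (pol 0 i) j + J M p' g' gN (fun n => pol (n+1)) j) := by
      rw [hQrec 0 (Nat.succ_pos M) i (pol 0 i)]
      apply Finset.sum_le_sum
      intro j _
      exact mul_le_mul_of_nonneg_left
        (add_le_add le_rfl ((ihfull j).2 (fun n => pol (n+1))))
        (hp0 0 (Nat.succ_pos M) i (pol 0 i) j)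
    exact le_trans (ciInf_le (hbdd 0 i) (pol 0 i)) hle

/-- a policy that acts greedily with respect to the DP backward recursion
Q-values at every stage and state is optimal. -/
theorem greedy_policy_optimal {S A : Type*} [Fintype S] [DecidableEq S] [Nonempty S]
    [Fintype A] [Nonempty A]
    (N : ℕ) (hN : 1 ≤ N)
    (p g : ℕ → S → A → S → ℝ) (gN : S → ℝ)
    (hp0 : ∀ n < N, ∀ i a j, 0 ≤ p n i a j)
    (hp1 : ∀ n < N, ∀ i a, ∑ j, p n i a j = 1)
    (Q : ℕ → S → A → ℝ)
    (hQN : ∀ s a, Q N s a = gN s)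
    (hQrec : ∀ k < N, ∀ s a,
      Q k s a = ∑ j, p k s a j * (g k s a j + ⨅ b, Q (k + 1) j b))
    (polstar : ℕ → S → A)
    (hgreedy : ∀ k < N, ∀ s : S, Q k s (polstar k s) = ⨅ a : A, Q k s a)
    (i : S) :
    J N p g gN polstar i = ⨅ pol : ℕ → S → A, J N p g gN pol i := by
  obtain ⟨h1, h2⟩ := key N p g gN hp0 hp1 Q hQN hQrec polstar hgreedy i
  have hle : ∀ pol : ℕ → S → A, J N p g gN polstar i ≤ J N p g gN pol i :=
    fun pol => h1 ▸ h2 pol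
  refine le_antisymm (le_ciInf hle) (ciInf_le ⟨J N p g gN polstar i, ?_⟩ polstar)
  rintro _ ⟨pol, rfl⟩
  exact hle pol
end
end

section
/- There exists a constant C₁ > 0, depending only on the single-stage costs and the MDP data, such that for every m ≥ 0, the conditional second moment of the Q-learning noise satisfies E[‖M^{m+1}‖² | F_m] ≤ C₁(1 + ‖Q^m‖²) almost surely, where ‖·‖ is the sup norm over all components (n,i,a) and F_m is the σ-algebra generated by the samples {η_{n'}^{l}(i',a') : l < m, n' < N, i' ∈ S, a' ∈ A}. -/
open Finset MeasureTheory ProbabilityTheory Filter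

noncomputable section

/-- The finite-horizon Q-learning iterates `Q^m_n(i,a)(ω)`.
`Qiter N g gN step η Q0 m n i a ω = Q^m_n(i,a)(ω)`, defined by
`Q^0 = Q0` and, for `n < N`,
`Q^{m+1}_n(i,a) = Q^m_n(i,a) + a(m)(g_n(i,a,η_n^m(i,a)) + min_b Q^m_{n+1}(η_n^m(i,a),b) − Q^m_n(i,a))`,
with `Q^{m+1}_N(i,a) = g_N(i)`. -/
def Qiter {S A Ω : Type*} [Fintype A] [Nonempty A] (N : ℕ)
    (g : ℕ → S → A → S → ℝ) (gN : S → ℝ) (step : ℕ → ℝ)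
    (η : ℕ → Fin N → S → A → Ω → S) (Q0 : ℕ → S → A → ℝ) :
    ℕ → ℕ → S → A → Ω → ℝ
  | 0, n, i, a, _ => Q0 n i a
  | m + 1, n, i, a, ω =>
      if h : n < N then
        Qiter N g gN step η Q0 m n i a ω +
          step m * (g n i a (η m ⟨n, h⟩ i a ω) +
            (⨅ b : A, Qiter N g gN step η Q0 m (n + 1) (η m ⟨n, h⟩ i a ω) b ω) -
            Qiter N g gN step η Q0 m n i a ω)
      else gN i

/-- The Q-learning noise `M^{m+1}_n(i,a)(ω)` (with `Mnoise … m` denoting `M^{m+1}`):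
for `n < N` it equals
`g_n(i,a,η_n^m(i,a)) + min_b Q^m_{n+1}(η_n^m(i,a),b)
  − Σ_j p_n(i,a,j)(g_n(i,a,j) + min_b Q^m_{n+1}(j,b))`,
and it vanishes for `n = N`. -/
def Mnoise {S A Ω : Type*} [Fintype S] [Fintype A] [Nonempty A] (N : ℕ)
    (p g : ℕ → S → A → S → ℝ) (gN : S → ℝ) (step : ℕ → ℝ)
    (η : ℕ → Fin N → S → A → Ω → S) (Q0 : ℕ → S → A → ℝ)
    (m n : ℕ) (i : S) (a : A) (ω : Ω) : ℝ :=
  if h : n < N then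
    g n i a (η m ⟨n, h⟩ i a ω) +
      (⨅ b : A, Qiter N g gN step η Q0 m (n + 1) (η m ⟨n, h⟩ i a ω) b ω) -
      ∑ j, p n i a j * (g n i a j + ⨅ b : A, Qiter N g gN step η Q0 m (n + 1) j b ω)
  else 0

/-- The σ-algebra `F_m` generated by the samples `η_{n'}^l(i',a')` for `l < m`. -/
def filt {S A Ω : Type*} [MeasurableSpace S] (N : ℕ)
    (η : ℕ → Fin N → S → A → Ω → S) (m : ℕ) : MeasurableSpace Ω :=
  ⨆ (l : ℕ) (_ : l < m) (n : Fin N) (i : S) (a : A),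
    MeasurableSpace.comap (η l n i a) inferInstance

/-! The bound holds pointwise, before conditioning. With `G` a bound for `|g|`, the sampled
target `g_n(i,a,η) + min_b Q^m_{n+1}(η,b)` and its `p_n(i,a,·)`-average both lie within
`G + ‖Q^m‖` of zero, so `‖M^{m+1}‖² ≤ 8(G² + 1)(1 + ‖Q^m‖²)`. The right-hand side is
`F_m`-measurable, because `Q^m` is a function of the samples drawn before time `m`, and it is
bounded, because each `Q^m` is (by induction on `m`); monotonicity of the conditional
expectation then gives the claim. -/

lemma measurable_apply_of_countable {α β γ : Type*} {mα : MeasurableSpace α}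
    [MeasurableSpace β] [MeasurableSpace γ] [Countable β] [MeasurableSingletonClass β]
    {F : β → α → γ} (hF : ∀ b, Measurable (F b)) {X : α → β} (hX : Measurable X) :
    Measurable fun x => F (X x) x :=
  (measurable_from_prod_countable_left (f := fun y : α × β => F y.2 y.1) hF).comp
    (measurable_id.prodMk hX)

lemma abs_ciInf_le_of_forall_abs_le {ι : Type*} [Finite ι] [Nonempty ι] {f : ι → ℝ} {c : ℝ}
    (hf : ∀ i, |f i| ≤ c) : |⨅ i, f i| ≤ c := by
  obtain ⟨i⟩ := ‹Nonempty ι›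
  exact abs_le.2 ⟨le_ciInf fun j => (abs_le.1 (hf j)).1,
    (ciInf_le (Finite.bddBelow_range f) i).trans (abs_le.1 (hf i)).2⟩

lemma abs_sum_mul_le_of_forall_abs_le {ι : Type*} {s : Finset ι} {w x : ι → ℝ} {c : ℝ}
    (hw0 : ∀ j ∈ s, 0 ≤ w j) (hw1 : ∑ j ∈ s, w j = 1) (hx : ∀ j ∈ s, |x j| ≤ c) :
    |∑ j ∈ s, w j * x j| ≤ c :=
  calc |∑ j ∈ s, w j * x j| ≤ ∑ j ∈ s, w j * c := by
        refine (abs_sum_le_sum_abs _ _).trans (sum_le_sum fun j hj => ?_)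
        rw [abs_mul, abs_of_nonneg (hw0 j hj)]
        exact mul_le_mul_of_nonneg_left (hx j hj) (hw0 j hj)
    _ = c := by rw [← sum_mul, hw1, one_mul]

lemma ae_condExp_le_of_le_of_le_const {α : Type*} {m m₀ : MeasurableSpace α} {μ : Measure α}
    [IsFiniteMeasure μ] (hm : m ≤ m₀) {f g : α → ℝ} {C : ℝ} (hf : AEStronglyMeasurable f μ)
    (hg : StronglyMeasurable[m] g) (hf0 : ∀ᵐ x ∂μ, 0 ≤ f x) (hfg : f ≤ᵐ[μ] g)
    (hgC : ∀ᵐ x ∂μ, g x ≤ C) : μ[f|m] ≤ᵐ[μ] g := by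
  have hg_int : Integrable g μ := by
    refine .of_bound (hg.mono hm).aestronglyMeasurable C ?_
    filter_upwards [hf0, hfg, hgC] with x h0 h1 h2
    rwa [Real.norm_of_nonneg (h0.trans h1)]
  have hf_int : Integrable f μ := by
    refine hg_int.mono hf ?_
    filter_upwards [hf0, hfg] with x h0 h1
    rwa [Real.norm_of_nonneg h0, Real.norm_of_nonneg (h0.trans h1)]
  simpa only [condExp_of_stronglyMeasurable hm hg hg_int] using
    condExp_mono (m := m) hf_int hg_int hfg

section Filtration

variable {S A Ω : Type*} [MeasurableSpace S] {N : ℕ} (η : ℕ → Fin N → S → A → Ω → S)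

lemma filt_mono : Monotone (filt N η) := fun _ _ h =>
  iSup₂_le fun l hl => le_iSup₂_of_le l (hl.trans_le h) le_rfl

lemma filt_le [mΩ : MeasurableSpace Ω] (hη : ∀ m n i a, Measurable (η m n i a)) (m : ℕ) :
    filt N η m ≤ mΩ :=
  iSup₂_le fun l _ => iSup_le fun n => iSup_le fun i => iSup_le fun a => (hη l n i a).comap_le

lemma measurable_sample_filt {l m : ℕ} (hl : l < m) (n : Fin N) (i : S) (a : A) :
    Measurable[filt N η m] (η l n i a) :=
  measurable_iff_comap_le.2 <| le_iSup₂_of_le l hl <| le_iSup_of_le n <| le_iSup_of_le i <|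
    le_iSup_of_le a le_rfl

end Filtration

section Iterates

variable {S A Ω : Type*} [Fintype A] [Nonempty A] {N : ℕ} {p g : ℕ → S → A → S → ℝ}
  {gN : S → ℝ} {step : ℕ → ℝ} {η : ℕ → Fin N → S → A → Ω → S} {Q0 : ℕ → S → A → ℝ}

variable (N g gN step η Q0) in
def bellmanTarget (m n : ℕ) (i : S) (a : A) (j : S) (ω : Ω) : ℝ :=
  g n i a j + ⨅ b, Qiter N g gN step η Q0 m (n + 1) j b ω

lemma Qiter_succ_of_lt (m : ℕ) {n : ℕ} (h : n < N) (i : S) (a : A) (ω : Ω) :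
    Qiter N g gN step η Q0 (m + 1) n i a ω = Qiter N g gN step η Q0 m n i a ω +
      step m * (bellmanTarget N g gN step η Q0 m n i a (η m ⟨n, h⟩ i a ω) ω -
        Qiter N g gN step η Q0 m n i a ω) := by
  simp only [Qiter, dif_pos h, bellmanTarget, add_sub_right_comm]

lemma Qiter_succ_of_not_lt (m : ℕ) {n : ℕ} (h : ¬n < N) (i : S) (a : A) (ω : Ω) :
    Qiter N g gN step η Q0 (m + 1) n i a ω = gN i := by
  simp only [Qiter, dif_neg h]

lemma Mnoise_of_lt [Fintype S] {m n : ℕ} (h : n < N) (i : S) (a : A) (ω : Ω) :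
    Mnoise N p g gN step η Q0 m n i a ω =
      bellmanTarget N g gN step η Q0 m n i a (η m ⟨n, h⟩ i a ω) ω -
        ∑ j, p n i a j * bellmanTarget N g gN step η Q0 m n i a j ω := by
  simp only [Mnoise, dif_pos h, bellmanTarget]

lemma Mnoise_of_not_lt [Fintype S] {m n : ℕ} (h : ¬n < N) (i : S) (a : A) (ω : Ω) :
    Mnoise N p g gN step η Q0 m n i a ω = 0 := by
  simp only [Mnoise, dif_neg h]

section Measurability

variable [Fintype S] [MeasurableSpace S] [MeasurableSingletonClass S]

lemma measurable_Qiter_filt (m n : ℕ) (i : S) (a : A) :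
    Measurable[filt N η m] (Qiter N g gN step η Q0 m n i a) := by
  induction m generalizing n i a with
  | zero => exact measurable_const
  | succ m ih =>
    have ih' : ∀ n i a, Measurable[filt N η (m + 1)] (Qiter N g gN step η Q0 m n i a) :=
      fun n i a => (ih n i a).mono (filt_mono η m.le_succ) le_rfl
    by_cases h : n < N
    · have hT : Measurable[filt N η (m + 1)] fun ω =>
          bellmanTarget N g gN step η Q0 m n i a (η m ⟨n, h⟩ i a ω) ω :=
        measurable_apply_of_countable (fun j => measurable_const.add (.iInf fun b => ih' _ j b))
          (measurable_sample_filt η m.lt_succ_self _ i a)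
      rw [funext (Qiter_succ_of_lt m h i a)]
      exact (ih' n i a).add (measurable_const.mul (hT.sub (ih' n i a)))
    · rw [funext (Qiter_succ_of_not_lt m h i a)]
      exact measurable_const

lemma measurable_Mnoise_filt (m n : ℕ) (i : S) (a : A) :
    Measurable[filt N η (m + 1)] (Mnoise N p g gN step η Q0 m n i a) := by
  have hT : ∀ j, Measurable[filt N η (m + 1)] (bellmanTarget N g gN step η Q0 m n i a j) :=
    fun j => measurable_const.add <| .iInf fun b =>
      (measurable_Qiter_filt m _ j b).mono (filt_mono η m.le_succ) le_rfl
  by_cases h : n < N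
  · rw [funext (Mnoise_of_lt h i a)]
    exact (measurable_apply_of_countable hT (measurable_sample_filt η m.lt_succ_self _ i a)).sub
      (Finset.measurable_sum _ fun j _ => measurable_const.mul (hT j))
  · rw [funext (Mnoise_of_not_lt h i a)]
    exact measurable_const

variable (g gN step η Q0) in
lemma measurable_iSup_abs_Qiter_filt (m : ℕ) : Measurable[filt N η m] fun ω =>
    ⨆ x : Fin (N + 1) × S × A, |Qiter N g gN step η Q0 m x.1 x.2.1 x.2.2 ω| :=
  .iSup fun x => measurable_abs.comp (measurable_Qiter_filt m x.1 x.2.1 x.2.2)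

variable (p g gN step η Q0) in
lemma measurable_iSup_abs_Mnoise_filt (m : ℕ) : Measurable[filt N η (m + 1)] fun ω =>
    ⨆ x : Fin (N + 1) × S × A, |Mnoise N p g gN step η Q0 m x.1 x.2.1 x.2.2 ω| :=
  .iSup fun x => measurable_abs.comp (measurable_Mnoise_filt m x.1 x.2.1 x.2.2)

end Measurability

section Bounds

lemma abs_bellmanTarget_le {m n : ℕ} {i : S} {a : A} {j : S} {ω : Ω} {G c : ℝ}
    (hg : |g n i a j| ≤ G) (hQ : ∀ b, |Qiter N g gN step η Q0 m (n + 1) j b ω| ≤ c) :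
    |bellmanTarget N g gN step η Q0 m n i a j ω| ≤ G + c :=
  (abs_add_le _ _).trans (add_le_add hg (abs_ciInf_le_of_forall_abs_le hQ))

lemma abs_Mnoise_le [Fintype S] (hp0 : ∀ n < N, ∀ i a j, 0 ≤ p n i a j)
    (hp1 : ∀ n < N, ∀ i a, ∑ j, p n i a j = 1) {G c : ℝ} (hG0 : 0 ≤ G)
    (hg : ∀ n < N, ∀ i a j, |g n i a j| ≤ G) {m : ℕ} {ω : Ω}
    (hQ : ∀ n ≤ N, ∀ i a, |Qiter N g gN step η Q0 m n i a ω| ≤ c) (n : ℕ) (i : S) (a : A) :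
    |Mnoise N p g gN step η Q0 m n i a ω| ≤ 2 * (G + c) := by
  by_cases h : n < N
  · have hT : ∀ j, |bellmanTarget N g gN step η Q0 m n i a j ω| ≤ G + c :=
      fun j => abs_bellmanTarget_le (hg n h i a j) fun b => hQ (n + 1) h j b
    rw [Mnoise_of_lt h, two_mul]
    exact (abs_sub _ _).trans (add_le_add (hT _) (abs_sum_mul_le_of_forall_abs_le
      (fun j _ => hp0 n h i a j) (hp1 n h i a) fun j _ => hT j))
  · rw [Mnoise_of_not_lt h, abs_zero]
    have hc := (abs_nonneg _).trans (hQ N le_rfl i a)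
    positivity

lemma iSup_abs_Mnoise_le [Fintype S] (hp0 : ∀ n < N, ∀ i a j, 0 ≤ p n i a j)
    (hp1 : ∀ n < N, ∀ i a, ∑ j, p n i a j = 1) {G : ℝ} (hG0 : 0 ≤ G)
    (hg : ∀ n < N, ∀ i a j, |g n i a j| ≤ G) (m : ℕ) (ω : Ω) :
    ⨆ x : Fin (N + 1) × S × A, |Mnoise N p g gN step η Q0 m x.1 x.2.1 x.2.2 ω| ≤
      2 * (G + ⨆ x : Fin (N + 1) × S × A, |Qiter N g gN step η Q0 m x.1 x.2.1 x.2.2 ω|) := by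
  have hQ0 := Real.iSup_nonneg fun x : Fin (N + 1) × S × A =>
    abs_nonneg (Qiter N g gN step η Q0 m x.1 x.2.1 x.2.2 ω)
  refine Real.iSup_le (fun x => abs_Mnoise_le hp0 hp1 hG0 hg (fun n hn i a => ?_) _ _ _)
    (by positivity)
  exact le_ciSup (Finite.bddAbove_range fun x : Fin (N + 1) × S × A =>
    |Qiter N g gN step η Q0 m x.1 x.2.1 x.2.2 ω|) ⟨⟨n, Nat.lt_succ_of_le hn⟩, i, a⟩

variable (g gN step η Q0) in
lemma exists_sq_iSup_abs_Mnoise_le [Fintype S] (hp0 : ∀ n < N, ∀ i a j, 0 ≤ p n i a j)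
    (hp1 : ∀ n < N, ∀ i a, ∑ j, p n i a j = 1) : ∃ C, 0 < C ∧ ∀ m (ω : Ω),
      (⨆ x : Fin (N + 1) × S × A, |Mnoise N p g gN step η Q0 m x.1 x.2.1 x.2.2 ω|) ^ 2 ≤
        C * (1 + (⨆ x : Fin (N + 1) × S × A,
          |Qiter N g gN step η Q0 m x.1 x.2.1 x.2.2 ω|) ^ 2) := by
  -- a sum rather than a maximum, so that `0 ≤ G` also when `N = 0`
  set G := ∑ x : Fin N × S × A × S, |g x.1 x.2.1 x.2.2.1 x.2.2.2|
  have hG0 : 0 ≤ G := sum_nonneg fun _ _ => abs_nonneg _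
  have hg : ∀ n < N, ∀ i a j, |g n i a j| ≤ G := fun n hn i a j =>
    single_le_sum (f := fun x : Fin N × S × A × S => |g x.1 x.2.1 x.2.2.1 x.2.2.2|)
      (fun _ _ => abs_nonneg _) (mem_univ (⟨n, hn⟩, i, a, j))
  refine ⟨8 * (G ^ 2 + 1), by positivity, fun m ω => ?_⟩
  have hMQ := iSup_abs_Mnoise_le (gN := gN) (step := step) (η := η) (Q0 := Q0) hp0 hp1 hG0 hg m ω
  set M := ⨆ x : Fin (N + 1) × S × A, |Mnoise N p g gN step η Q0 m x.1 x.2.1 x.2.2 ω|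
  set q := ⨆ x : Fin (N + 1) × S × A, |Qiter N g gN step η Q0 m x.1 x.2.1 x.2.2 ω|
  have hM0 : 0 ≤ M := Real.iSup_nonneg fun _ => abs_nonneg _
  have hq0 : 0 ≤ q := Real.iSup_nonneg fun _ => abs_nonneg _
  nlinarith [sq_nonneg (G - q)]

variable [Finite S]

variable (N g gN step η Q0) in
lemma exists_forall_abs_Qiter_le (m : ℕ) :
    ∃ B, ∀ n ≤ N, ∀ (i : S) (a : A) (ω : Ω), |Qiter N g gN step η Q0 m n i a ω| ≤ B := by
  obtain ⟨G, hG⟩ := Finite.exists_le fun x : Fin N × S × A × S => |g x.1 x.2.1 x.2.2.1 x.2.2.2|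
  obtain ⟨GN, hGN⟩ := Finite.exists_le fun i : S => |gN i|
  induction m with
  | zero =>
    obtain ⟨B, hB⟩ := Finite.exists_le fun x : Fin (N + 1) × S × A => |Q0 x.1 x.2.1 x.2.2|
    exact ⟨B, fun n hn i a _ => hB (⟨n, Nat.lt_succ_of_le hn⟩, i, a)⟩
  | succ m ih =>
    obtain ⟨B, hB⟩ := ih
    refine ⟨max (B + |step m| * (G + B + B)) GN, fun n hn i a ω => ?_⟩
    by_cases h : n < N
    · have hT := abs_bellmanTarget_le (hG (⟨n, h⟩, i, a, η m ⟨n, h⟩ i a ω))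
        fun b => hB (n + 1) h _ b ω
      have hQ := hB n hn i a ω
      rw [Qiter_succ_of_lt m h]
      refine le_max_of_le_left ((abs_add_le _ _).trans ?_)
      rw [abs_mul]
      gcongr
      exact (abs_sub _ _).trans (add_le_add hT hQ)
    · rw [Qiter_succ_of_not_lt m h]
      exact le_max_of_le_right (hGN i)

variable (N g gN step η Q0) in
lemma exists_forall_iSup_abs_Qiter_le (m : ℕ) : ∃ B, ∀ ω : Ω,
    ⨆ x : Fin (N + 1) × S × A, |Qiter N g gN step η Q0 m x.1 x.2.1 x.2.2 ω| ≤ B := by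
  obtain ⟨B, hB⟩ := exists_forall_abs_Qiter_le N g gN step η Q0 m
  exact ⟨max B 0, fun ω => Real.iSup_le (fun x => (hB x.1 x.1.is_le _ _ ω).trans (le_max_left _ _))
    (le_max_right _ _)⟩

end Bounds

end Iterates

theorem noise_conditional_second_moment_bound_general
    {S A Ω : Type*} [Fintype S] [MeasurableSpace S]
    [MeasurableSingletonClass S] [Fintype A] [Nonempty A] [MeasurableSpace Ω]
    (N : ℕ)
    (p g : ℕ → S → A → S → ℝ) (gN : S → ℝ)
    (hp0 : ∀ n < N, ∀ i a j, 0 ≤ p n i a j)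
    (hp1 : ∀ n < N, ∀ i a, ∑ j, p n i a j = 1)
    (P : Measure Ω) [IsProbabilityMeasure P]
    (η : ℕ → Fin N → S → A → Ω → S)
    (hmeas : ∀ m n i a, Measurable (η m n i a))
    (step : ℕ → ℝ)
    (Q0 : ℕ → S → A → ℝ) :
    ∃ C₁ : ℝ, 0 < C₁ ∧ ∀ m : ℕ, ∀ᵐ ω ∂P,
      MeasureTheory.condExp (filt N η m) P
          (fun ω' => (⨆ x : Fin (N + 1) × S × A,
            |Mnoise N p g gN step η Q0 m (x.1 : ℕ) x.2.1 x.2.2 ω'|) ^ 2) ω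
        ≤ C₁ * (1 + (⨆ x : Fin (N + 1) × S × A,
            |Qiter N g gN step η Q0 m (x.1 : ℕ) x.2.1 x.2.2 ω|) ^ 2) := by
  obtain ⟨C, hC, hMQ⟩ := exists_sq_iSup_abs_Mnoise_le g gN step η Q0 hp0 hp1
  refine ⟨C, hC, fun m => ?_⟩
  obtain ⟨B, hB⟩ := exists_forall_iSup_abs_Qiter_le N g gN step η Q0 m
  have hM_meas :=
    (measurable_iSup_abs_Mnoise_filt p g gN step η Q0 m).mono (filt_le η hmeas _) le_rfl
  have hQ_meas := measurable_iSup_abs_Qiter_filt g gN step η Q0 m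
  refine ae_condExp_le_of_le_of_le_const (filt_le η hmeas m) (C := C * (1 + B ^ 2))
    (hM_meas.pow_const 2).aestronglyMeasurable
    (hQ_meas.pow_const 2 |>.const_add 1 |>.const_mul C).stronglyMeasurable
    (ae_of_all _ fun _ => sq_nonneg _) (ae_of_all _ (hMQ m)) (ae_of_all _ fun ω => ?_)
  gcongr
  exacts [Real.iSup_nonneg fun _ => abs_nonneg _, hB ω]

/-- the conditional second moment of the Q-learning noise is bounded,
uniformly in `m`, by `C₁(1 + ‖Q^m‖²)` for some constant `C₁ > 0`, where `‖·‖` denotes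
the sup norm over all components `(n,i,a)`. -/
theorem noise_conditional_second_moment_bound
    {S A Ω : Type*} [Fintype S] [Nonempty S] [MeasurableSpace S]
    [MeasurableSingletonClass S] [Fintype A] [Nonempty A] [MeasurableSpace Ω]
    (N : ℕ) (hN : 1 ≤ N)
    (p g : ℕ → S → A → S → ℝ) (gN : S → ℝ)
    (hp0 : ∀ n < N, ∀ i a j, 0 ≤ p n i a j)
    (hp1 : ∀ n < N, ∀ i a, ∑ j, p n i a j = 1)
    (P : Measure Ω) [IsProbabilityMeasure P]
    (η : ℕ → Fin N → S → A → Ω → S)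
    (hmeas : ∀ m n i a, Measurable (η m n i a))
    (hdist : ∀ (m : ℕ) (n : Fin N) (i : S) (a : A) (j : S),
      P {ω | η m n i a ω = j} = ENNReal.ofReal (p n i a j))
    (hindep : iIndepFun (β := fun _ : ℕ × Fin N × S × A => S)
      (fun x => η x.1 x.2.1 x.2.2.1 x.2.2.2) P)
    (step : ℕ → ℝ) (hstep : ∀ m, 0 < step m)
    (Q0 : ℕ → S → A → ℝ) (hQ0N : ∀ i a, Q0 N i a = gN i) :
    ∃ C₁ : ℝ, 0 < C₁ ∧ ∀ m : ℕ, ∀ᵐ ω ∂P,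
      MeasureTheory.condExp (filt N η m) P
          (fun ω' => (⨆ x : Fin (N + 1) × S × A,
            |Mnoise N p g gN step η Q0 m (x.1 : ℕ) x.2.1 x.2.2 ω'|) ^ 2) ω
        ≤ C₁ * (1 + (⨆ x : Fin (N + 1) × S × A,
            |Qiter N g gN step η Q0 m (x.1 : ℕ) x.2.1 x.2.2 ω|) ^ 2) :=
  noise_conditional_second_moment_bound_general N p g gN hp0 hp1 P η hmeas step Q0

end
end
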